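/- arXiv:0807.0465 — 4 statements merged into one kernel-verified Lean document; each statement's English description precedes it below -/
import Mathlib

section
/- The operator A defined by A_{iα}^{jβ} = 2 ε^{jk}_i (I_k)_α^β satisfies A² = −2A + 8·Id, hence A is invertible with inverse A⁻¹ = (1/8)(A + 2·Id). -/
open Matrix

noncomputable def eps (i j k : Fin 3) : ℝ :=
  (((j : ℝ) - (i : ℝ)) * ((k : ℝ) - (j : ℝ)) * ((k : ℝ) - (i : ℝ))) / 2

/-- The operator `(A u)_{iα} = 2 ε_i^{jk} (I_k)_α^β u_{jβ}` built from quaternionic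
structures satisfies `A² = −2A + 8·Id`, hence is invertible with
`A⁻¹ = (1/8)(A + 2·Id)`. -/
theorem stmt_5 (N : ℕ) (I : Fin 3 → Matrix (Fin N) (Fin N) ℝ)
    (hcomp : ∀ i j, I i * I j =
      -((if i = j then (1 : ℝ) else 0) • 1) + ∑ k, eps i j k • I k)
    (A : (Fin 3 → Fin N → ℝ) →ₗ[ℝ] (Fin 3 → Fin N → ℝ))
    (hA : ∀ u i, A u i = ∑ j, ∑ k, (2 * eps i j k) • (I k).mulVec (u j)) :
    A ∘ₗ A = (-2 : ℝ) • A + (8 : ℝ) • LinearMap.id ∧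
    A ∘ₗ (((1 : ℝ) / 8) • (A + (2 : ℝ) • LinearMap.id)) = LinearMap.id ∧
    (((1 : ℝ) / 8) • (A + (2 : ℝ) • LinearMap.id)) ∘ₗ A = LinearMap.id := by
  have hAu : ∀ u, (A u 0 = (2:ℝ) • (I 2).mulVec (u 1) - (2:ℝ) • (I 1).mulVec (u 2))
      ∧ (A u 1 = (2:ℝ) • (I 0).mulVec (u 2) - (2:ℝ) • (I 2).mulVec (u 0))
      ∧ (A u 2 = (2:ℝ) • (I 1).mulVec (u 0) - (2:ℝ) • (I 0).mulVec (u 1)) := by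
    intro u
    refine ⟨?_, ?_, ?_⟩ <;>
    · rw [hA]
      simp only [Fin.sum_univ_three, eps]
      norm_num
      module
  have hsq : ∀ u, A (A u) = (-2 : ℝ) • A u + (8 : ℝ) • u := by
    intro u
    have comp : ∀ (k m : Fin 3) (v : Fin N → ℝ),
        (I k).mulVec ((I m).mulVec v) = (I k * I m).mulVec v := by
      intro k m v; rw [← Matrix.mulVec_mulVec]
    funext i
    obtain ⟨h0, h1, h2⟩ := hAu u
    obtain ⟨g0, g1, g2⟩ := hAu (A u)
    have c00 := hcomp 0 0; have c01 := hcomp 0 1; have c02 := hcomp 0 2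
    have c10 := hcomp 1 0; have c11 := hcomp 1 1; have c12 := hcomp 1 2
    have c20 := hcomp 2 0; have c21 := hcomp 2 1; have c22 := hcomp 2 2
    simp only [Fin.sum_univ_three, eps] at c00 c01 c02 c10 c11 c12 c20 c21 c22
    norm_num [Fin.ext_iff] at c00 c01 c02 c10 c11 c12 c20 c21 c22
    have e0 : A (A u) 0 = ((-2 : ℝ) • A u + (8 : ℝ) • u) 0 := by
      simp only [Pi.add_apply, Pi.smul_apply, g0, h0, h1, h2,
        Matrix.mulVec_sub, Matrix.mulVec_smul, comp, c00, c01, c02, c10, c11, c12, c20, c21, c22,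
        Matrix.neg_mulVec, Matrix.one_mulVec]
      module
    have e1 : A (A u) 1 = ((-2 : ℝ) • A u + (8 : ℝ) • u) 1 := by
      simp only [Pi.add_apply, Pi.smul_apply, g1, h0, h1, h2,
        Matrix.mulVec_sub, Matrix.mulVec_smul, comp, c00, c01, c02, c10, c11, c12, c20, c21, c22,
        Matrix.neg_mulVec, Matrix.one_mulVec]
      module
    have e2 : A (A u) 2 = ((-2 : ℝ) • A u + (8 : ℝ) • u) 2 := by
      simp only [Pi.add_apply, Pi.smul_apply, g2, h0, h1, h2,
        Matrix.mulVec_sub, Matrix.mulVec_smul, comp, c00, c01, c02, c10, c11, c12, c20, c21, c22,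
        Matrix.neg_mulVec, Matrix.one_mulVec]
      module
    fin_cases i
    · exact e0
    · exact e1
    · exact e2
  refine ⟨?_, ?_, ?_⟩
  · apply LinearMap.ext; intro u
    simpa using hsq u
  · apply LinearMap.ext; intro u
    simp only [LinearMap.comp_apply, LinearMap.smul_apply, LinearMap.add_apply,
      LinearMap.id_apply, _root_.map_smul, map_add, hsq u]
    module
  · apply LinearMap.ext; intro u
    simp only [LinearMap.comp_apply, LinearMap.smul_apply, LinearMap.add_apply,
      LinearMap.id_apply, hsq u]
    module
end

section
/- The differential at 0 of the parabolic exponential map Ψ(X,Y) = γ_{(X,Y)}(1) acts as the identity on vectors X ∈ H_q (i.e. Ψ_*(X,0) = X) and as multiplication by 1/2 on vectors Y ∈ V_q (i.e. Ψ_*(0,Y) = Y/2); in particular Ψ_* is invertible and Ψ is a local diffeomorphism near 0. -/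
/-- Coordinate form of the covariant derivative along a curve `γ` of a vector
field `Z` along `γ`, for a linear connection with Christoffel symbols `Γ`. -/
noncomputable def covD {E : Type*} [NormedAddCommGroup E] [NormedSpace ℝ E]
    (Γ : E → E →L[ℝ] E →L[ℝ] E) (γ Z : ℝ → E) : ℝ → E :=
  fun t => deriv Z t + Γ (γ t) (deriv γ t) (Z t)

/-- The differential at `0` of the parabolic exponential map `Ψ(X,Y) = γ_{(X,Y)}(1)`
is the identity on `H` and multiplication by `1/2` on `V`; in particular it is
invertible and `Ψ` is a local diffeomorphism near `0`. -/
theorem stmt_11 {H V : Type*}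
    [NormedAddCommGroup H] [NormedSpace ℝ H] [FiniteDimensional ℝ H]
    [NormedAddCommGroup V] [NormedSpace ℝ V] [FiniteDimensional ℝ V]
    (Γ : H × V → (H × V) →L[ℝ] (H × V) →L[ℝ] (H × V)) (q : H × V)
    (γ : H × V → ℝ → H × V)
    (hsm : ContDiff ℝ (⊤ : ℕ∞) (fun p : (H × V) × ℝ => γ p.1 p.2))
    (hgeo : ∀ v t, covD Γ (γ v) (covD Γ (γ v) (deriv (γ v))) t = 0)
    (h0 : ∀ v, γ v 0 = q)
    (h1 : ∀ (X : H) (Y : V), deriv (γ (X, Y)) 0 = (X, 0))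
    (h2 : ∀ (X : H) (Y : V), covD Γ (γ (X, Y)) (deriv (γ (X, Y))) 0 = (0, Y))
    (hscale : ∀ (X : H) (Y : V) (a t : ℝ),
      γ (a • X, (a ^ 2) • Y) t = γ (X, Y) (a * t)) :
    (∀ X : H, fderiv ℝ (fun v : H × V => γ v 1) 0 (X, 0) = (X, 0)) ∧
    (∀ Y : V, fderiv ℝ (fun v : H × V => γ v 1) 0 (0, Y) = (0, (1 / 2 : ℝ) • Y)) ∧
    Function.Bijective (fderiv ℝ (fun v : H × V => γ v 1) 0) ∧
    (∃ e : PartialHomeomorph (H × V) (H × V),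
      e.source ∈ nhds 0 ∧ ∀ v ∈ e.source, e v = γ v 1) := by
  set f : H × V → H × V := fun v => γ v 1 with hf_def
  have hfsm : ContDiff ℝ (⊤ : ℕ∞) f := hsm.comp (contDiff_id.prodMk contDiff_const)
  have hfd : HasFDerivAt f (fderiv ℝ f 0) 0 :=
    (hfsm.differentiable (by simp) 0).hasFDerivAt
  -- For any v, the directional derivative of f along v at 0 is fderiv f 0 v.
  have key : ∀ v : H × V, HasDerivAt (fun a : ℝ => f (a • v)) (fderiv ℝ f 0 v) 0 := by
    intro v
    have hsv : HasDerivAt (fun a : ℝ => a • v) v 0 := by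
      simpa using (hasDerivAt_id (0 : ℝ)).smul_const v
    have hfd' : HasFDerivAt f (fderiv ℝ f 0) ((0 : ℝ) • v) := by simpa using hfd
    simpa [Function.comp_def] using hfd'.comp_hasDerivAt 0 hsv
  -- H part
  have hH : ∀ X : H, fderiv ℝ f 0 (X, 0) = ((X, 0) : H × V) := by
    intro X
    have hc : (fun a : ℝ => f (a • ((X, (0 : V)) : H × V))) = fun a => γ (X, (0 : V)) a := by
      funext a
      have hs := hscale X 0 a 1
      simp only [smul_zero, mul_one] at hs
      simpa [f, Prod.smul_mk, smul_zero] using hs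
    have h := key (X, (0 : V))
    rw [hc] at h
    rw [← h.deriv]
    exact h1 X 0
  -- V part
  have hV : ∀ Y : V, fderiv ℝ f 0 ((0 : H), Y) = (((0 : H), (1 / 2 : ℝ) • Y) : H × V) := by
    intro Y
    set F : ℝ → H × V := fun a => f (a • (((0 : H), Y) : H × V)) with hF_def
    have hFsm : ContDiff ℝ (⊤ : ℕ∞) F :=
      hfsm.comp ((contDiff_id (E := ℝ)).smul contDiff_const)
    have hFdiff : Differentiable ℝ F := hFsm.differentiable (by simp)
    have hDFsm := (contDiff_infty_iff_deriv.mp (hFsm.of_le (by simp))).2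
    have hDF0 : deriv F 0 = fderiv ℝ f 0 ((0 : H), Y) := (key _).deriv
    set g : ℝ → H × V := γ ((0 : H), Y) with hg_def
    have hgF : ∀ b : ℝ, g b = F (b ^ 2) := by
      intro b
      have hs := hscale 0 Y b 1
      simp only [smul_zero, mul_one] at hs
      simp [g, F, f, Prod.smul_mk, smul_zero, ← hs]
    -- deriv g b = (2*b) • deriv F (b^2)
    have hgd : ∀ b : ℝ, HasDerivAt g ((2 * b) • deriv F (b ^ 2)) b := by
      intro b
      have hsq : HasDerivAt (fun b : ℝ => b ^ 2) (2 * b) b := by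
        simpa using hasDerivAt_pow 2 b
      have hF' : HasDerivAt F (deriv F (b ^ 2)) (b ^ 2) := (hFdiff (b ^ 2)).hasDerivAt
      have := HasDerivAt.scomp_of_eq (x := b) hF' hsq rfl
      exact this.congr_of_eventuallyEq (Filter.Eventually.of_forall fun x => hgF x)
    have hdg : deriv g = fun b => (2 * b) • deriv F (b ^ 2) := funext fun b => (hgd b).deriv
    -- second derivative of g at 0 is 2 • deriv F 0
    have hgd2 : HasDerivAt (deriv g) ((2 : ℝ) • deriv F 0) 0 := by
      have hc : HasDerivAt (fun b : ℝ => 2 * b) 2 0 := by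
        simpa using (hasDerivAt_id (0 : ℝ)).const_mul (2 : ℝ)
      have hsq : HasDerivAt (fun b : ℝ => b ^ 2) (2 * 0) 0 := by
        simpa using hasDerivAt_pow 2 (0 : ℝ)
      have hu : HasDerivAt (fun b : ℝ => deriv F (b ^ 2)) (((2 : ℝ) * 0) • deriv (deriv F) ((0 : ℝ) ^ 2)) 0 := by
        have hDF' : HasDerivAt (deriv F) (deriv (deriv F) ((0 : ℝ) ^ 2)) ((0 : ℝ) ^ 2) :=
          ((hDFsm.differentiable (by simp)) _).hasDerivAt
        simpa [Function.comp_def] using HasDerivAt.scomp_of_eq (x := (0:ℝ)) hDF' hsq rfl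
      have := hc.smul hu
      rw [hdg]
      refine this.congr_deriv ?_
      simp
    have hdd : deriv (deriv g) 0 = (2 : ℝ) • deriv F 0 := hgd2.deriv
    -- use h2 to identify the second derivative
    have hcov := h2 0 Y
    have hdg0 : deriv g 0 = ((0 : H), (0 : V)) := h1 0 Y
    rw [show covD Γ (γ ((0 : H), Y)) (deriv (γ ((0 : H), Y))) 0 =
        deriv (deriv g) 0 + Γ (g 0) (deriv g 0) (deriv g 0) from rfl] at hcov
    rw [hdg0] at hcov
    have hΓ0 : Γ (g 0) (((0 : H), (0 : V)) : H × V) (((0 : H), (0 : V)) : H × V) = 0 := by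
      have : (((0 : H), (0 : V)) : H × V) = 0 := rfl
      rw [this]; simp
    rw [hΓ0, add_zero, hdd, hDF0] at hcov
    have : fderiv ℝ f 0 ((0 : H), Y) = (1 / 2 : ℝ) • (((0 : H), Y) : H × V) := by
      have hc := congrArg (fun z : H × V => (1 / 2 : ℝ) • z) hcov
      simp only [smul_smul] at hc
      norm_num at hc
      rw [hc]
      simp [Prod.smul_mk]
    rw [this]
    simp [Prod.smul_mk]
  -- full derivative
  have hfull : ∀ p : H × V, fderiv ℝ f 0 p = ((p.1, (1 / 2 : ℝ) • p.2) : H × V) := by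
    intro p
    have : p = ((p.1, 0) : H × V) + ((0, p.2) : H × V) := by simp
    rw [this, map_add, hH, hV]
    simp
  have hbij : Function.Bijective (fderiv ℝ f 0) := by
    constructor
    · intro a b hab
      rw [hfull a, hfull b, Prod.mk.injEq] at hab
      have h2 : a.2 = b.2 := by
        have := hab.2
        have h2ne : (1 / 2 : ℝ) ≠ 0 := by norm_num
        exact smul_right_injective V h2ne this
      exact Prod.ext hab.1 h2
    · intro p
      refine ⟨(p.1, (2 : ℝ) • p.2), ?_⟩
      rw [hfull]
      simp [smul_smul]
  refine ⟨hH, hV, hbij, ?_⟩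
  -- local diffeomorphism
  let L : (H × V) ≃ₗ[ℝ] (H × V) :=
    LinearEquiv.ofBijective ((fderiv ℝ f 0) : (H × V) →ₗ[ℝ] (H × V)) hbij
  let L' : (H × V) ≃L[ℝ] (H × V) := L.toContinuousLinearEquiv
  have hstrict : HasStrictFDerivAt f ((L' : (H × V) →L[ℝ] (H × V))) 0 := by
    have h : HasStrictFDerivAt f (fderiv ℝ f 0) 0 :=
      (hfsm.contDiffAt (x := (0 : H × V))).hasStrictFDerivAt (by simp)
    have : (L' : (H × V) →L[ℝ] (H × V)) = fderiv ℝ f 0 :=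
      ContinuousLinearMap.ext fun p => rfl
    rw [this]
    exact h
  refine ⟨(hstrict.toOpenPartialHomeomorph f).toPartialHomeomorph, ?_, ?_⟩
  · exact (hstrict.toOpenPartialHomeomorph f).open_source.mem_nhds
      hstrict.mem_toOpenPartialHomeomorph_source
  · intro v _
    exact congrFun hstrict.toOpenPartialHomeomorph_coe v
end

section
/- For homogeneous quadratic polynomials in (x,t) with x ∈ ℝ^(4n) of parabolic degree 1 and t ∈ ℝ³ of parabolic degree 2 (so parabolic degree 2 polynomials are spanned by {x^α x^β} and {t^i}), the operator L₂ = |x|² 𝓛₀ + t^i T_i − 2, where 𝓛₀ = −Σ_α X_α X_α and T_i = 2∂_{t^i}, has kernel exactly the span of t¹, t², t³, and is invertible on the subspace of quadratic polynomials in x alone. -/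
/-- `X_α = ∂_α + 2 (I_i)_{βα} x^β ∂_{t^i}` as a directional derivative. -/
noncomputable def Xop (n : ℕ) (I : Fin 3 → Fin (4 * n) → Fin (4 * n) → ℝ)
    (α : Fin (4 * n)) (v : (Fin (4 * n) → ℝ) × (Fin 3 → ℝ) → ℝ) :
    (Fin (4 * n) → ℝ) × (Fin 3 → ℝ) → ℝ :=
  fun p => fderiv ℝ v p (Pi.single α 1, fun i => 2 * ∑ β, I i β α * p.1 β)

/-- `T_i = 2∂_{t^i}` as a directional derivative. -/
noncomputable def Tvf (n : ℕ) (i : Fin 3)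
    (v : (Fin (4 * n) → ℝ) × (Fin 3 → ℝ) → ℝ) :
    (Fin (4 * n) → ℝ) × (Fin 3 → ℝ) → ℝ :=
  fun p => fderiv ℝ v p (0, Pi.single i 2)

/-- `L₂ = |x|² 𝓛₀ + t^i T_i − 2` where `𝓛₀ = −Σ_α X_α X_α`. -/
noncomputable def Ltwo (n : ℕ) (I : Fin 3 → Fin (4 * n) → Fin (4 * n) → ℝ)
    (v : (Fin (4 * n) → ℝ) × (Fin 3 → ℝ) → ℝ) :
    (Fin (4 * n) → ℝ) × (Fin 3 → ℝ) → ℝ :=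
  fun p => (∑ α, p.1 α ^ 2) * (-(∑ γ, Xop n I γ (Xop n I γ v) p))
    + (∑ i, p.2 i * Tvf n i v p) - 2 * v p

namespace Matrix

variable {ι R : Type*} [Fintype ι]

def quadForm [CommRing R] (c : Matrix ι ι R) (x : ι → R) : R :=
  ∑ α, ∑ β, c α β * x α * x β

section CommRing

variable [CommRing R]

lemma quadForm_add (c c' : Matrix ι ι R) (x : ι → R) :
    quadForm (c + c') x = quadForm c x + quadForm c' x := by
  simp only [quadForm, Matrix.add_apply, add_mul, Finset.sum_add_distrib]

lemma quadForm_sub (c c' : Matrix ι ι R) (x : ι → R) :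
    quadForm (c - c') x = quadForm c x - quadForm c' x := by
  simp only [quadForm, Matrix.sub_apply, sub_mul, Finset.sum_sub_distrib]

lemma quadForm_smul (a : R) (c : Matrix ι ι R) (x : ι → R) :
    quadForm (a • c) x = a * quadForm c x := by
  simp only [quadForm, Matrix.smul_apply, smul_eq_mul, Finset.mul_sum, mul_assoc]

variable [DecidableEq ι]

lemma quadForm_one (x : ι → R) : quadForm (1 : Matrix ι ι R) x = ∑ α, x α ^ 2 := by
  simp [quadForm, one_apply, ite_mul, sq]

lemma quadForm_single (c : Matrix ι ι R) (γ : ι) : quadForm c (Pi.single γ 1) = c γ γ := by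
  simp [quadForm, Pi.single_apply, mul_ite]

lemma quadForm_single_add_single (c : Matrix ι ι R) (α β : ι) :
    quadForm c (Pi.single α 1 + Pi.single β 1) = c α α + c α β + c β α + c β β := by
  simp only [quadForm, Pi.add_apply, Pi.single_apply, mul_add, mul_ite, mul_one, mul_zero,
    Finset.sum_add_distrib, Finset.sum_ite_eq', Finset.mem_univ, ↓reduceIte]
  ring

lemma trace_eq_zero_of_quadForm_eq_zero {c : Matrix ι ι R} (hc : ∀ x, quadForm c x = 0) :
    trace c = 0 :=
  Finset.sum_eq_zero fun γ _ => (quadForm_single c γ).symm.trans (hc _)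

def traceShift : Matrix ι ι R →ₗ[R] Matrix ι ι R :=
  LinearMap.id + (traceLinearMap ι R R).smulRight 1

lemma traceShift_apply (c : Matrix ι ι R) : traceShift c = c + trace c • 1 := rfl

lemma trace_traceShift (c : Matrix ι ι R) :
    trace (traceShift c) = (Fintype.card ι + 1) * trace c := by
  rw [traceShift_apply, trace_add, trace_smul, trace_one, smul_eq_mul]
  ring

lemma traceShift_transpose (c : Matrix ι ι R) : traceShift cᵀ = (traceShift c)ᵀ := by
  simp [traceShift_apply, transpose_add]

end CommRing

variable [Field R] [CharZero R] [DecidableEq ι]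

lemma IsSymm.eq_zero_of_quadForm_eq_zero {c : Matrix ι ι R} (hsymm : c.IsSymm)
    (hc : ∀ x, quadForm c x = 0) : c = 0 := by
  have hdiag : ∀ γ, c γ γ = 0 := fun γ => (quadForm_single c γ).symm.trans (hc _)
  ext α β
  have h := quadForm_single_add_single c α β
  rw [hc, hdiag, hdiag, hsymm.apply α β, zero_add, add_zero, ← two_mul] at h
  simpa using h.symm

lemma IsSymm.eq_of_quadForm_eq {c c' : Matrix ι ι R} (hc : c.IsSymm) (hc' : c'.IsSymm)
    (h : ∀ x, quadForm c x = quadForm c' x) : c = c' :=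
  sub_eq_zero.mp <| (hc.sub hc').eq_zero_of_quadForm_eq_zero fun x => by
    rw [quadForm_sub, h, sub_self]

lemma trace_eq_zero_of_trace_traceShift_eq_zero {c : Matrix ι ι R}
    (hc : trace (traceShift c) = 0) : trace c = 0 := by
  rw [trace_traceShift] at hc
  exact (mul_eq_zero.mp hc).resolve_left (Nat.cast_add_one_ne_zero _)

lemma traceShift_injective : Function.Injective (traceShift (ι := ι) (R := R)) := by
  rw [← LinearMap.ker_eq_bot, LinearMap.ker_eq_bot']
  intro c hc
  have htr : trace c = 0 := trace_eq_zero_of_trace_traceShift_eq_zero (by rw [hc, trace_zero])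
  simpa [traceShift_apply, htr] using hc

lemma traceShift_surjective : Function.Surjective (traceShift (ι := ι) (R := R)) :=
  LinearMap.injective_iff_surjective.mp traceShift_injective

lemma isSymm_traceShift_iff {c : Matrix ι ι R} : (traceShift c).IsSymm ↔ c.IsSymm :=
  ⟨fun h => traceShift_injective (by rw [traceShift_transpose, h.eq]),
    fun h => by rw [IsSymm, ← traceShift_transpose, h.eq]⟩

lemma forall_quadForm_traceShift_eq_zero_iff {c : Matrix ι ι R} :
    (∀ x, quadForm (traceShift c) x = 0) ↔ ∀ x, quadForm c x = 0 := by
  constructor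
  · intro h x
    have htr := trace_eq_zero_of_trace_traceShift_eq_zero (trace_eq_zero_of_quadForm_eq_zero h)
    simpa [traceShift_apply, htr] using h x
  · intro h x
    simp [traceShift_apply, trace_eq_zero_of_quadForm_eq_zero h, h x]

end Matrix

open Matrix

section Derivatives

variable {ι κ : Type*} [Fintype ι] [Fintype κ]

lemma fderiv_quadForm_add_dotProduct_apply (c : Matrix ι ι ℝ) (d : κ → ℝ)
    (p u : (ι → ℝ) × (κ → ℝ)) :
    fderiv ℝ (fun q : (ι → ℝ) × (κ → ℝ) => quadForm c q.1 + d ⬝ᵥ q.2) p u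
      = ∑ α, ∑ β, c α β * (u.1 α * p.1 β + p.1 α * u.1 β) + d ⬝ᵥ u.2 := by
  let x (α : ι) : (ι → ℝ) × (κ → ℝ) →L[ℝ] ℝ :=
    (ContinuousLinearMap.proj α).comp (ContinuousLinearMap.fst ℝ _ _)
  let t (i : κ) : (ι → ℝ) × (κ → ℝ) →L[ℝ] ℝ :=
    (ContinuousLinearMap.proj i).comp (ContinuousLinearMap.snd ℝ _ _)
  have h : HasFDerivAt (fun q : (ι → ℝ) × (κ → ℝ) => quadForm c q.1 + d ⬝ᵥ q.2) _ p :=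
    (HasFDerivAt.fun_sum fun α _ =>
      HasFDerivAt.fun_sum fun β _ =>
        ((x α).hasFDerivAt |>.const_mul (c α β)).mul (x β).hasFDerivAt).add
    (HasFDerivAt.fun_sum fun i _ => (t i).hasFDerivAt.const_mul (d i))
  rw [h.fderiv]
  simp only [x, t, ContinuousLinearMap.comp_apply, ContinuousLinearMap.coe_fst',
    ContinuousLinearMap.coe_snd', ContinuousLinearMap.proj_apply, _root_.add_apply,
    _root_.sum_apply, _root_.smul_apply, smul_eq_mul, dotProduct, add_left_inj]
  exact Finset.sum_congr rfl fun α _ => Finset.sum_congr rfl fun β _ => by ring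

lemma fderiv_dotProduct_fst_apply (a : ι → ℝ) (p u : (ι → ℝ) × (κ → ℝ)) :
    fderiv ℝ (fun q : (ι → ℝ) × (κ → ℝ) => a ⬝ᵥ q.1) p u = a ⬝ᵥ u.1 := by
  let x (α : ι) : (ι → ℝ) × (κ → ℝ) →L[ℝ] ℝ :=
    (ContinuousLinearMap.proj α).comp (ContinuousLinearMap.fst ℝ _ _)
  have h : HasFDerivAt (fun q : (ι → ℝ) × (κ → ℝ) => a ⬝ᵥ q.1) _ p :=
    HasFDerivAt.fun_sum fun α _ => (x α).hasFDerivAt.const_mul (a α)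
  rw [h.fderiv]
  simp [x, dotProduct]

end Derivatives

section Operators

variable {n : ℕ} {I : Fin 3 → Fin (4 * n) → Fin (4 * n) → ℝ}

lemma Xop_quadForm_add_dotProduct (γ : Fin (4 * n)) (c : Matrix (Fin (4 * n)) (Fin (4 * n)) ℝ)
    (d : Fin 3 → ℝ) :
    Xop n I γ (fun q => quadForm c q.1 + d ⬝ᵥ q.2)
      = fun q => (fun β => c γ β + c β γ + 2 * ∑ i, d i * I i β γ) ⬝ᵥ q.1 := by
  funext p
  rw [Xop, fderiv_quadForm_add_dotProduct_apply]
  simp only [Pi.single_apply, ite_mul, one_mul, zero_mul, mul_ite, mul_one, mul_zero, mul_add,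
    Finset.sum_add_distrib, Finset.sum_ite_irrel, Finset.sum_const_zero, Finset.sum_ite_eq',
    Finset.mem_univ, ↓reduceIte, dotProduct, Finset.mul_sum, add_mul, Finset.sum_mul,
    add_right_inj]
  rw [Finset.sum_comm]
  exact Finset.sum_congr rfl fun β _ => Finset.sum_congr rfl fun i _ => by ring

lemma Xop_dotProduct_fst (γ : Fin (4 * n)) (a : Fin (4 * n) → ℝ) :
    Xop n I γ (fun q => a ⬝ᵥ q.1) = fun _ => a γ := by
  funext p
  rw [Xop, fderiv_dotProduct_fst_apply]
  simp [dotProduct, Pi.single_apply]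

lemma Tvf_quadForm_add_dotProduct (i : Fin 3) (c : Matrix (Fin (4 * n)) (Fin (4 * n)) ℝ)
    (d : Fin 3 → ℝ) :
    Tvf n i (fun q => quadForm c q.1 + d ⬝ᵥ q.2) = fun _ => 2 * d i := by
  funext p
  rw [Tvf, fderiv_quadForm_add_dotProduct_apply]
  simp [dotProduct, Pi.single_apply, mul_comm]

lemma Ltwo_quadForm_add_dotProduct (hI : ∀ i γ, I i γ γ = 0)
    (c : Matrix (Fin (4 * n)) (Fin (4 * n)) ℝ) (d : Fin 3 → ℝ)
    (p : (Fin (4 * n) → ℝ) × (Fin 3 → ℝ)) :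
    Ltwo n I (fun q => quadForm c q.1 + d ⬝ᵥ q.2) p = -2 * quadForm (traceShift c) p.1 := by
  simp only [Ltwo, Xop_quadForm_add_dotProduct, Xop_dotProduct_fst, Tvf_quadForm_add_dotProduct,
    hI, traceShift_apply, quadForm_add, quadForm_smul, quadForm_one]
  have hT : ∑ i, p.2 i * (2 * d i) = 2 * d ⬝ᵥ p.2 := by
    simp only [dotProduct, Finset.mul_sum]
    exact Finset.sum_congr rfl fun i _ => by ring
  rw [hT]
  simp only [mul_zero, Finset.sum_const_zero, add_zero, Finset.sum_add_distrib, trace, diag_apply]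
  ring

lemma Ltwo_quadForm (hI : ∀ i γ, I i γ γ = 0) (c : Matrix (Fin (4 * n)) (Fin (4 * n)) ℝ)
    (p : (Fin (4 * n) → ℝ) × (Fin 3 → ℝ)) :
    Ltwo n I (fun q => quadForm c q.1) p = -2 * quadForm (traceShift c) p.1 := by
  simpa using Ltwo_quadForm_add_dotProduct hI c 0 p

end Operators

theorem stmt_15_general (n : ℕ) (I : Fin 3 → Fin (4 * n) → Fin (4 * n) → ℝ)
    (hI : ∀ i α β, I i α β = -I i β α) :
    (∀ (c : Fin (4 * n) → Fin (4 * n) → ℝ) (d : Fin 3 → ℝ),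
      ((∀ p : (Fin (4 * n) → ℝ) × (Fin 3 → ℝ),
          Ltwo n I (fun q =>
            (∑ α, ∑ β, c α β * q.1 α * q.1 β) + ∑ i, d i * q.2 i) p = 0) ↔
        (∀ p : (Fin (4 * n) → ℝ) × (Fin 3 → ℝ),
          (∑ α, ∑ β, c α β * p.1 α * p.1 β) + ∑ i, d i * p.2 i
            = ∑ i, d i * p.2 i))) ∧
    (∀ c : Fin (4 * n) → Fin (4 * n) → ℝ, (∀ α β, c α β = c β α) →
      ∃ c' : Fin (4 * n) → Fin (4 * n) → ℝ,
        (∀ α β, c' α β = c' β α) ∧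
        (∀ p : (Fin (4 * n) → ℝ) × (Fin 3 → ℝ),
          Ltwo n I (fun q => ∑ α, ∑ β, c' α β * q.1 α * q.1 β) p
            = ∑ α, ∑ β, c α β * p.1 α * p.1 β) ∧
        (∀ c'' : Fin (4 * n) → Fin (4 * n) → ℝ, (∀ α β, c'' α β = c'' β α) →
          (∀ p : (Fin (4 * n) → ℝ) × (Fin 3 → ℝ),
            Ltwo n I (fun q => ∑ α, ∑ β, c'' α β * q.1 α * q.1 β) p
              = ∑ α, ∑ β, c α β * p.1 α * p.1 β) →
          c'' = c')) := by
  have hdiag : ∀ i γ, I i γ γ = 0 := fun i γ => by linarith [hI i γ γ]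
  refine ⟨fun (c : Matrix _ _ ℝ) d => ?_, fun (c : Matrix _ _ ℝ) hc => ?_⟩
  · change (∀ p, Ltwo n I (fun q => quadForm c q.1 + d ⬝ᵥ q.2) p = 0) ↔
      ∀ p : (Fin (4 * n) → ℝ) × (Fin 3 → ℝ), quadForm c p.1 + d ⬝ᵥ p.2 = d ⬝ᵥ p.2
    simp only [Ltwo_quadForm_add_dotProduct hdiag, mul_eq_zero, add_eq_right, Prod.forall]
    simpa using forall_quadForm_traceShift_eq_zero_iff
  · have hL : ∀ (e : Matrix (Fin (4 * n)) (Fin (4 * n)) ℝ) p,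
        Ltwo n I (fun q => ∑ α, ∑ β, e α β * q.1 α * q.1 β) p
          = -2 * quadForm (traceShift e) p.1 :=
      Ltwo_quadForm hdiag
    have hc_symm : c.IsSymm := IsSymm.ext fun α β => hc β α
    obtain ⟨c', hc'⟩ := traceShift_surjective (-(1 / 2 : ℝ) • c)
    have hc'_symm : c'.IsSymm := isSymm_traceShift_iff.mp (hc' ▸ hc_symm.smul _)
    refine ⟨c', fun α β => hc'_symm.apply β α, fun p => ?_,
      fun (c'' : Matrix _ _ ℝ) hc'' h'' => ?_⟩
    · show _ = quadForm c p.1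
      rw [hL, hc', quadForm_smul]
      ring
    · have hc''_symm : c''.IsSymm := IsSymm.ext fun α β => hc'' β α
      refine traceShift_injective <| hc' ▸
        (isSymm_traceShift_iff.mpr hc''_symm).eq_of_quadForm_eq (hc_symm.smul _) fun x => ?_
      have h := h'' (x, 0)
      rw [hL] at h
      change _ = quadForm c x at h
      rw [quadForm_smul]
      linarith

/-- On quadratic parabolic-degree-2 polynomials (spanned by `x^α x^β` and `t^i`),
the operator `L₂ = |x|²𝓛₀ + t^i T_i − 2` has kernel exactly the span of
`t¹, t², t³`, and is invertible on the quadratics in `x` alone. -/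
theorem stmt_15 (n : ℕ) (I : Fin 3 → Fin (4 * n) → Fin (4 * n) → ℝ)
    (hI : ∀ i α β, I i α β = -I i β α)
    (hcomp : ∀ i j α γ, (∑ β, I i α β * I j β γ) =
      -((if i = j then (1 : ℝ) else 0) * (if α = γ then (1 : ℝ) else 0))
        + ∑ k, eps i j k * I k α γ) :
    (∀ (c : Fin (4 * n) → Fin (4 * n) → ℝ) (d : Fin 3 → ℝ),
      ((∀ p : (Fin (4 * n) → ℝ) × (Fin 3 → ℝ),
          Ltwo n I (fun q =>
            (∑ α, ∑ β, c α β * q.1 α * q.1 β) + ∑ i, d i * q.2 i) p = 0) ↔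
        (∀ p : (Fin (4 * n) → ℝ) × (Fin 3 → ℝ),
          (∑ α, ∑ β, c α β * p.1 α * p.1 β) + ∑ i, d i * p.2 i
            = ∑ i, d i * p.2 i))) ∧
    (∀ c : Fin (4 * n) → Fin (4 * n) → ℝ, (∀ α β, c α β = c β α) →
      ∃ c' : Fin (4 * n) → Fin (4 * n) → ℝ,
        (∀ α β, c' α β = c' β α) ∧
        (∀ p : (Fin (4 * n) → ℝ) × (Fin 3 → ℝ),
          Ltwo n I (fun q => ∑ α, ∑ β, c' α β * q.1 α * q.1 β) p
            = ∑ α, ∑ β, c α β * p.1 α * p.1 β) ∧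
        (∀ c'' : Fin (4 * n) → Fin (4 * n) → ℝ, (∀ α β, c'' α β = c'' β α) →
          (∀ p : (Fin (4 * n) → ℝ) × (Fin 3 → ℝ),
            Ltwo n I (fun q => ∑ α, ∑ β, c'' α β * q.1 α * q.1 β) p
              = ∑ α, ∑ β, c α β * p.1 α * p.1 β) →
          c'' = c')) :=
  stmt_15_general n I hI
end

section
/- Let R be an algebraic curvature tensor (antisymmetric in each pair, pair-symmetric, satisfying the algebraic Bianchi identity) on an inner product space H carrying skew-adjoint quaternionic structures I₁, I₂, I₃, and suppose R commutes with each I_i in its second pair of indices, i.e. R_{αβγδ}(I_i)^δ_ρ = R_{αβρδ}(I_i)^δ_γ for i = 1,2,3, so that R lies in 𝔰𝔭(n) in the last two indices. Then the contraction R_{αβγδ} R^{αβ}{}_{μν} (I_i)^{γμ} (I^i)^{δν} (summed over i = 1,2,3) equals 3 R_{αβγδ} R^{αβγδ}. -/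
open Matrix

/-- For an algebraic curvature tensor `R` on a quaternionic inner product space
(skew-adjoint `I₁,I₂,I₃` satisfying the quaternion relations), if `R` commutes
with each `I_i` in its second pair of indices (i.e. lies in `𝔰𝔭(n)` there), then
`R_{αβγδ} R^{αβ}_{μν} (I_i)^{γμ} (I^i)^{δν} = 3 R_{αβγδ} R^{αβγδ}`. -/
theorem stmt_19 (N : ℕ) (I : Fin 3 → Matrix (Fin N) (Fin N) ℝ)
    (hsq : ∀ i, I i * I i = -1)
    (h123 : I 0 * I 1 * I 2 = -1)
    (hskew : ∀ i, (I i)ᵀ = -(I i))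
    (R : Fin N → Fin N → Fin N → Fin N → ℝ)
    (h1 : ∀ a b c d, R a b c d = -R b a c d)
    (h2 : ∀ a b c d, R a b c d = -R a b d c)
    (h3 : ∀ a b c d, R a b c d = R c d a b)
    (hB : ∀ a b c d, R a b c d + R b c a d + R c a b d = 0)
    (hcomm : ∀ (i : Fin 3) (a b c r : Fin N),
      (∑ d, R a b c d * I i d r) = ∑ d, R a b r d * I i d c) :
    (∑ i : Fin 3, ∑ a, ∑ b, ∑ c, ∑ d, ∑ x, ∑ y,
        R a b c d * R a b x y * I i c x * I i d y)
      = 3 * ∑ a, ∑ b, ∑ c, ∑ d, R a b c d * R a b c d := by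
  have key : ∀ (i : Fin 3) (a b x y : Fin N),
      (∑ c, ∑ d, R a b c d * I i c x * I i d y) = R a b x y := by
    intro i a b x y
    calc ∑ c, ∑ d, R a b c d * I i c x * I i d y
        = ∑ c, I i c x * ∑ d, R a b c d * I i d y := by
          simp only [Finset.mul_sum]
          exact Finset.sum_congr rfl fun c _ =>
            Finset.sum_congr rfl fun d _ => by ring
      _ = ∑ c, I i c x * ∑ d, R a b y d * I i d c := by
          simp_rw [hcomm]
      _ = ∑ d, R a b y d * ∑ c, I i d c * I i c x := by
          simp only [Finset.mul_sum]
          rw [Finset.sum_comm]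
          exact Finset.sum_congr rfl fun d _ =>
            Finset.sum_congr rfl fun c _ => by ring
      _ = ∑ d, R a b y d * (I i * I i) d x := by
          simp_rw [Matrix.mul_apply]
      _ = -R a b y x := by
          rw [hsq]
          simp [Matrix.neg_apply, Matrix.one_apply, mul_ite]
      _ = R a b x y := by
          have := h2 a b y x
          linarith
  have inner : ∀ (i : Fin 3) (a b : Fin N),
      (∑ c, ∑ d, ∑ x, ∑ y, R a b c d * R a b x y * I i c x * I i d y)
        = ∑ c, ∑ d, R a b c d * R a b c d := by
    intro i a b
    calc ∑ c, ∑ d, ∑ x, ∑ y, R a b c d * R a b x y * I i c x * I i d y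
        = ∑ c, ∑ x, ∑ d, ∑ y, R a b c d * R a b x y * I i c x * I i d y := by
          exact Finset.sum_congr rfl fun c _ => Finset.sum_comm
      _ = ∑ x, ∑ c, ∑ d, ∑ y, R a b c d * R a b x y * I i c x * I i d y := by
          exact Finset.sum_comm
      _ = ∑ x, ∑ c, ∑ y, ∑ d, R a b c d * R a b x y * I i c x * I i d y := by
          exact Finset.sum_congr rfl fun x _ =>
            Finset.sum_congr rfl fun c _ => Finset.sum_comm
      _ = ∑ x, ∑ y, ∑ c, ∑ d, R a b c d * R a b x y * I i c x * I i d y := by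
          exact Finset.sum_congr rfl fun x _ => Finset.sum_comm
      _ = ∑ x, ∑ y, R a b x y * R a b x y := by
          refine Finset.sum_congr rfl fun x _ => Finset.sum_congr rfl fun y _ => ?_
          have step : (∑ c, ∑ d, R a b c d * R a b x y * I i c x * I i d y)
              = R a b x y * ∑ c, ∑ d, R a b c d * I i c x * I i d y := by
            simp only [Finset.mul_sum]
            exact Finset.sum_congr rfl fun c _ =>
              Finset.sum_congr rfl fun d _ => by ring
          rw [step, key]
      _ = ∑ c, ∑ d, R a b c d * R a b c d := rfl
  have main : ∀ i : Fin 3,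
      (∑ a, ∑ b, ∑ c, ∑ d, ∑ x, ∑ y, R a b c d * R a b x y * I i c x * I i d y)
        = ∑ a, ∑ b, ∑ c, ∑ d, R a b c d * R a b c d := by
    intro i
    exact Finset.sum_congr rfl fun a _ => Finset.sum_congr rfl fun b _ => inner i a b
  simp only [main]
  rw [Fin.sum_univ_three]
  ring
end
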